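/- Let 0<p<q≤1 and let X be an n-dimensional p-normed space. Define the q-Banach envelope X^q as the q-normed space whose unit ball is the q-convex hull of the unit ball of X. Then the Banach-Mazur distance satisfies d(X, X^q) ≤ n^{1/p - 1/q}. -/

import Mathlib

open Finset

def PConvex {X : Type*} [AddCommGroup X] [Module ℝ X] (p : ℝ) (S : Set X) : Prop :=
  ∀ x ∈ S, ∀ y ∈ S, ∀ a b : ℝ, 0 ≤ a → 0 ≤ b → a ^ p + b ^ p = 1 → a • x + b • y ∈ S

def pConvHull {X : Type*} [AddCommGroup X] [Module ℝ X] (p : ℝ) (A : Set X) : Set X :=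
  ⋂₀ {S : Set X | PConvex p S ∧ A ⊆ S}

open Pointwise

/-! The unit ball `B` of `N` lies in its `q`-convex hull, which gives `gauge ≤ N`. Conversely, a
point of the hull is a combination `∑ cᵢ • Pᵢ` with `Pᵢ ∈ B`, `cᵢ ≥ 0`, `∑ cᵢ ^ q ≤ 1`, and at most
`n` terms are needed: along a linear dependency `g` of the `Pᵢ`, `t ↦ ∑ (cᵢ + t gᵢ) ^ q` is concave,
so moving to one end of the interval where all coefficients stay nonnegative kills a coefficient
without increasing `∑ cᵢ ^ q`. For `k ≤ n` terms the `p`-triangle inequality and the comparison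
`∑ cᵢ ^ p ≤ k ^ (1 - p / q)` of the `ℓ_p` and `ℓ_q` norms give `N (∑ cᵢ • Pᵢ) ≤ n ^ (1/p - 1/q)`. -/

section Coefficients

variable {ι : Type*} [Fintype ι]

lemma exists_nonneg_add_mul_eq_zero {c g : ι → ℝ} (hc : ∀ i, 0 ≤ c i) (hg : ∃ i, g i < 0) :
    ∃ t, 0 ≤ t ∧ (∀ i, 0 ≤ c i + t * g i) ∧ ∃ i, c i + t * g i = 0 := by
  obtain ⟨i₀, hi₀, hmin⟩ := exists_min_image {i | g i < 0} (fun i => c i / -g i)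
    (by simpa [Finset.Nonempty] using hg)
  simp only [mem_filter, mem_univ, true_and] at hi₀ hmin
  have ht : 0 ≤ c i₀ / -g i₀ := div_nonneg (hc i₀) (neg_pos.2 hi₀).le
  refine ⟨c i₀ / -g i₀, ht, fun i => ?_, i₀, by field_simp [hi₀.ne]; ring⟩
  rcases lt_or_ge (g i) 0 with hgi | hgi
  · have := (le_div_iff₀ (neg_pos.2 hgi)).1 (hmin i hgi)
    linarith
  · nlinarith [hc i]

lemma concaveOn_sum_rpow_add_mul {q : ℝ} (hq0 : 0 ≤ q) (hq1 : q ≤ 1) (c g : ι → ℝ) :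
    ConcaveOn ℝ {t | ∀ i, 0 ≤ c i + t * g i} fun t => ∑ i, (c i + t * g i) ^ q := by
  have hline : ∀ {x y a b : ℝ} (i : ι), a + b = 1 →
      c i + (a * x + b * y) * g i = a * (c i + x * g i) + b * (c i + y * g i) := by
    intro x y a b i hab
    linear_combination (-c i) * hab
  refine ⟨fun x hx y hy a b ha hb hab i => ?_, fun x hx y hy a b ha hb hab => ?_⟩
  · simp only [smul_eq_mul, hline i hab]
    have := hx i; have := hy i
    positivity
  · simp only [smul_eq_mul, mul_sum, ← sum_add_distrib, hline _ hab]
    exact sum_le_sum fun i _ => (Real.concaveOn_rpow hq0 hq1).2 (hx i) (hy i) ha hb hab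

lemma exists_sum_rpow_add_mul_le {q : ℝ} (hq0 : 0 ≤ q) (hq1 : q ≤ 1) {c g : ι → ℝ}
    (hc : ∀ i, 0 ≤ c i) (hg : g ≠ 0) :
    ∃ t, (∀ i, 0 ≤ c i + t * g i) ∧ (∃ i, c i + t * g i = 0) ∧
      ∑ i, (c i + t * g i) ^ q ≤ ∑ i, c i ^ q := by
  wlog hneg : ∃ i, g i < 0 generalizing g
  · obtain ⟨t, ht⟩ := this (neg_ne_zero.2 hg) (by
      by_contra! h
      exact hg (funext fun i => le_antisymm (by simpa using h i) (not_lt.1 (hneg ⟨i, ·⟩))))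
    refine ⟨-t, ?_⟩
    simpa only [Pi.neg_apply, mul_neg, neg_mul] using ht
  obtain ⟨tp, htp, hposp, hzerop⟩ := exists_nonneg_add_mul_eq_zero hc hneg
  by_cases hmixed : ∃ i, 0 < g i
  · obtain ⟨tm, htm, hposm, hzerom⟩ := exists_nonneg_add_mul_eq_zero (g := -g) hc
      (by simpa using hmixed)
    simp only [Pi.neg_apply, mul_neg, ← neg_mul] at hposm hzerom
    have hmin := (concaveOn_sum_rpow_add_mul hq0 hq1 c g).ge_on_segment hposm hposp
      (by rw [segment_eq_Icc (by linarith)]; exact ⟨by linarith, htp⟩)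
    simp only [zero_mul, add_zero] at hmin
    rcases min_le_iff.1 hmin with h | h
    · exact ⟨_, hposm, hzerom, h⟩
    · exact ⟨_, hposp, hzerop, h⟩
  · push Not at hmixed
    refine ⟨tp, hposp, hzerop, sum_le_sum fun i _ => ?_⟩
    exact Real.rpow_le_rpow (hposp i) (by nlinarith [hmixed i]) hq0

lemma sum_rpow_le_card_rpow {p q : ℝ} (hp0 : 0 < p) (hpq : p ≤ q)
    {c : ι → ℝ} (hc : ∀ i, 0 ≤ c i) (hs : ∑ i, c i ^ q ≤ 1) :
    ∑ i, c i ^ p ≤ (Fintype.card ι : ℝ) ^ (1 - p / q) := by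
  have hq0 : 0 < q := hp0.trans_le hpq
  have hr : 1 ≤ q / p := (one_le_div hp0).2 hpq
  have hpow : ∀ i, (c i ^ p) ^ (q / p) = c i ^ q := fun i => by
    rw [← Real.rpow_mul (hc i), mul_div_cancel₀ _ hp0.ne']
  have hmean := Real.rpow_sum_le_const_mul_sum_rpow_of_nonneg (s := univ) hr
    (fun i _ => Real.rpow_nonneg (hc i) p)
  simp only [hpow, card_univ] at hmean
  have hk : (0 : ℝ) ≤ Fintype.card ι := Nat.cast_nonneg _
  have hS : 0 ≤ ∑ i, c i ^ q := sum_nonneg fun i _ => Real.rpow_nonneg (hc i) q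
  rw [← Real.le_rpow_inv_iff_of_pos (sum_nonneg fun i _ => Real.rpow_nonneg (hc i) p)
    (by positivity) (by positivity)] at hmean
  calc ∑ i, c i ^ p
      ≤ ((Fintype.card ι : ℝ) ^ (q / p - 1) * ∑ i, c i ^ q) ^ (q / p)⁻¹ := hmean
    _ ≤ ((Fintype.card ι : ℝ) ^ (q / p - 1)) ^ (q / p)⁻¹ := by
        gcongr
        exact mul_le_of_le_one_right (by positivity) hs
    _ = (Fintype.card ι : ℝ) ^ (1 - p / q) := by
        rw [← Real.rpow_mul hk]
        congr 1
        field_simp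

end Coefficients

section PConvHull

variable {X : Type*} [AddCommGroup X] [Module ℝ X] {p q : ℝ} {A : Set X}

lemma subset_pConvHull : A ⊆ pConvHull p A :=
  Set.subset_sInter fun _ hS => hS.2

lemma pConvHull_min {S : Set X} (hS : PConvex p S) (hAS : A ⊆ S) : pConvHull p A ⊆ S :=
  Set.sInter_subset_of_mem ⟨hS, hAS⟩

def qCombinations (q : ℝ) (A : Set X) (k : ℕ) : Set X :=
  {x | ∃ (c : Fin k → ℝ) (P : Fin k → X), (∀ i, 0 ≤ c i) ∧ (∀ i, P i ∈ A) ∧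
    ∑ i, c i ^ q ≤ 1 ∧ ∑ i, c i • P i = x}

lemma subset_iUnion_qCombinations : A ⊆ ⋃ k, qCombinations q A k :=
  fun x hx => Set.mem_iUnion.2 ⟨1, fun _ => 1, fun _ => x, fun _ => zero_le_one, fun _ => hx,
    by simp, by simp⟩

lemma pConvex_iUnion_qCombinations : PConvex q (⋃ k, qCombinations q A k) := by
  simp only [PConvex, Set.mem_iUnion]
  rintro _ ⟨k, c, P, hc, hP, hs, rfl⟩ _ ⟨l, d, Q, hd, hQ, ht, rfl⟩ a b ha hb hab
  refine ⟨k + l, Fin.append (a • c) (b • d), Fin.append P Q,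
    Fin.addCases (by simpa using fun i => mul_nonneg ha (hc i))
      (by simpa using fun j => mul_nonneg hb (hd j)),
    Fin.addCases (by simpa using hP) (by simpa using hQ), ?_, ?_⟩
  · simp only [Fin.sum_univ_add, Fin.append_left, Fin.append_right, Pi.smul_apply, smul_eq_mul]
    have hac : ∀ i, (a * c i) ^ q = a ^ q * c i ^ q := fun i => Real.mul_rpow ha (hc i)
    have hbd : ∀ j, (b * d j) ^ q = b ^ q * d j ^ q := fun j => Real.mul_rpow hb (hd j)
    simp only [hac, hbd, ← mul_sum]
    calc a ^ q * ∑ i, c i ^ q + b ^ q * ∑ j, d j ^ q ≤ a ^ q * 1 + b ^ q * 1 := by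
          gcongr
      _ = 1 := by rw [mul_one, mul_one, hab]
  · simp only [Fin.sum_univ_add, Fin.append_left, Fin.append_right, Pi.smul_apply, smul_eq_mul,
      mul_smul, ← smul_sum]

lemma pConvHull_subset_iUnion_qCombinations : pConvHull q A ⊆ ⋃ k, qCombinations q A k :=
  pConvHull_min pConvex_iUnion_qCombinations subset_iUnion_qCombinations

lemma sum_smul_mem_qCombinations_of_eq_zero (hq0 : q ≠ 0) {k : ℕ} {c : Fin (k + 1) → ℝ}
    {P : Fin (k + 1) → X} (hc : ∀ i, 0 ≤ c i) (hP : ∀ i, P i ∈ A) (hs : ∑ i, c i ^ q ≤ 1)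
    {i₀ : Fin (k + 1)} (hi₀ : c i₀ = 0) : ∑ i, c i • P i ∈ qCombinations q A k := by
  refine ⟨c ∘ i₀.succAbove, P ∘ i₀.succAbove, fun i => hc _, fun i => hP _, ?_, ?_⟩
  · simpa [Fin.sum_univ_succAbove _ i₀, hi₀, Real.zero_rpow hq0] using hs
  · simp [Fin.sum_univ_succAbove _ i₀, hi₀]

lemma qCombinations_succ_subset [FiniteDimensional ℝ X] (hq0 : 0 < q) (hq1 : q ≤ 1) {k : ℕ}
    (hk : Module.finrank ℝ X < k + 1) : qCombinations q A (k + 1) ⊆ qCombinations q A k := by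
  rintro _ ⟨c, P, hc, hP, hs, rfl⟩
  obtain ⟨g, hgP, hg⟩ : ∃ g : Fin (k + 1) → ℝ, ∑ i, g i • P i = 0 ∧ ∃ i, g i ≠ 0 :=
    Fintype.not_linearIndependent_iff.1 fun h =>
      hk.not_ge (by simpa using h.fintype_card_le_finrank)
  obtain ⟨t, hpos, ⟨i₀, hi₀⟩, hle⟩ :=
    exists_sum_rpow_add_mul_le hq0.le hq1 hc (Function.ne_iff.2 hg)
  have hsum : ∑ i, (c i + t * g i) • P i = ∑ i, c i • P i := by
    simp [add_smul, sum_add_distrib, mul_smul, ← smul_sum, hgP]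
  rw [← hsum]
  exact sum_smul_mem_qCombinations_of_eq_zero hq0.ne' hpos hP (hle.trans hs) hi₀

theorem exists_mem_qCombinations_of_mem_pConvHull [FiniteDimensional ℝ X] (hq0 : 0 < q)
    (hq1 : q ≤ 1) {x : X} (hx : x ∈ pConvHull q A) :
    ∃ k ≤ Module.finrank ℝ X, x ∈ qCombinations q A k := by
  obtain ⟨k, hk⟩ := Set.mem_iUnion.1 (pConvHull_subset_iUnion_qCombinations hx)
  induction k with
  | zero => exact ⟨0, Nat.zero_le _, hk⟩
  | succ m ih =>
    rcases le_or_gt (m + 1) (Module.finrank ℝ X) with hm | hm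
    · exact ⟨m + 1, hm, hk⟩
    · exact ih (qCombinations_succ_subset hq0 hq1 hm hk)

end PConvHull

section PNorm

variable {X : Type*} [AddCommGroup X] [Module ℝ X] {N : X → ℝ}

lemma le_rpow_of_mem_qCombinations {p q : ℝ} (hp0 : 0 < p) (hpq : p ≤ q) (hN0 : ∀ x, 0 ≤ N x)
    (hNh : ∀ (a : ℝ) (x : X), N (a • x) = |a| * N x)
    (hNp : ∀ x y : X, N (x + y) ^ p ≤ N x ^ p + N y ^ p) {k : ℕ} {x : X}
    (hx : x ∈ qCombinations q {y | N y ≤ 1} k) : N x ≤ (k : ℝ) ^ (1 / p - 1 / q) := by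
  obtain ⟨c, P, hc, hP, hs, rfl⟩ := hx
  have hzero : N 0 = 0 := by simpa using hNh 0 0
  have hterm : ∀ i, N (c i • P i) ^ p ≤ c i ^ p := fun i => by
    rw [hNh, abs_of_nonneg (hc i), Real.mul_rpow (hc i) (hN0 _)]
    exact mul_le_of_le_one_right (Real.rpow_nonneg (hc i) p)
      (Real.rpow_le_one (hN0 _) (hP i) hp0.le)
  have hpow : N (∑ i, c i • P i) ^ p ≤ (k : ℝ) ^ (1 - p / q) := calc
    N (∑ i, c i • P i) ^ p ≤ ∑ i, N (c i • P i) ^ p :=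
      le_sum_of_subadditive (N · ^ p) (by simp [hzero, Real.zero_rpow hp0.ne']) hNp _ _
    _ ≤ ∑ i, c i ^ p := sum_le_sum fun i _ => hterm i
    _ ≤ (k : ℝ) ^ (1 - p / q) := by simpa using sum_rpow_le_card_rpow hp0 hpq hc hs
  rw [← Real.rpow_le_rpow_iff (hN0 _) (by positivity) hp0, ← Real.rpow_mul (Nat.cast_nonneg _)]
  convert hpow using 2
  field_simp

lemma mem_smul_setOf_le_one (hNh : ∀ (a : ℝ) (x : X), N (a • x) = |a| * N x) {r : ℝ}
    (hr : 0 < r) {x : X} (hx : N x ≤ r) : x ∈ r • {y | N y ≤ 1} := by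
  refine Set.mem_smul_set.2 ⟨r⁻¹ • x, ?_, smul_inv_smul₀ hr.ne' x⟩
  rw [Set.mem_ofPred_eq, hNh, abs_of_pos (inv_pos.2 hr), inv_mul_le_one₀ hr]
  exact hx

lemma gauge_le_of_setOf_le_one_subset (hN0 : ∀ x, 0 ≤ N x)
    (hNh : ∀ (a : ℝ) (x : X), N (a • x) = |a| * N x) {s : Set X} (hs : {y | N y ≤ 1} ⊆ s)
    (x : X) : gauge s x ≤ N x := by
  refine le_of_forall_pos_le_add fun ε hε => gauge_le_of_mem (by linarith [hN0 x]) ?_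
  exact Set.smul_set_mono hs (mem_smul_setOf_le_one hNh (by linarith [hN0 x]) (by linarith))

lemma le_mul_gauge_of_subset_setOf_le (hN0 : ∀ x, 0 ≤ N x)
    (hNh : ∀ (a : ℝ) (x : X), N (a • x) = |a| * N x) {s : Set X} {C : ℝ}
    (hs : {y | N y ≤ 1} ⊆ s) (hsC : s ⊆ {y | N y ≤ C}) (x : X) : N x ≤ C * gauge s x := by
  have hzero : N 0 = 0 := by simpa using hNh 0 0
  have hC : 0 ≤ C := (hN0 0).trans (hsC (hs (by simp [hzero])))
  have hx1 : 0 < N x + 1 := by linarith [hN0 x]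
  rw [gauge_def, ← smul_eq_mul, ← Real.sInf_smul_of_nonneg hC]
  refine le_csInf ⟨C • (N x + 1),
    ⟨N x + 1, ⟨hx1, Set.smul_set_mono hs (mem_smul_setOf_le_one hNh hx1 (by linarith))⟩, rfl⟩⟩ ?_
  rintro _ ⟨r, ⟨hr : 0 < r, ⟨e, he, rfl⟩⟩, rfl⟩
  change N (r • e) ≤ C * r
  rw [hNh, abs_of_pos hr, mul_comm C]
  exact mul_le_mul_of_nonneg_left (hsC he) hr.le

end PNorm

theorem distance_to_q_envelope_general (p q : ℝ) (hp0 : 0 < p) (hpq : p < q) (hq1 : q ≤ 1)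
    (n : ℕ) (N : (Fin n → ℝ) → ℝ)
    (hN0 : ∀ x, 0 ≤ N x)
    (hNh : ∀ (a : ℝ) (x : Fin n → ℝ), N (a • x) = |a| * N x)
    (hNp : ∀ x y : Fin n → ℝ, N (x + y) ^ p ≤ N x ^ p + N y ^ p) :
    ∀ x : Fin n → ℝ,
      gauge (pConvHull q {y : Fin n → ℝ | N y ≤ 1}) x ≤ N x ∧
      N x ≤ (n : ℝ) ^ ((1 : ℝ) / p - 1 / q) *
              gauge (pConvHull q {y : Fin n → ℝ | N y ≤ 1}) x := by
  have hbound : pConvHull q {y | N y ≤ 1} ⊆ {y | N y ≤ (n : ℝ) ^ ((1 : ℝ) / p - 1 / q)} := by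
    intro y hy
    obtain ⟨k, hk, hyk⟩ := exists_mem_qCombinations_of_mem_pConvHull (hp0.trans hpq) hq1 hy
    rw [Module.finrank_fin_fun] at hk
    refine (le_rpow_of_mem_qCombinations hp0 hpq.le hN0 hNh hNp hyk).trans ?_
    gcongr
    exact sub_nonneg.2 (one_div_le_one_div_of_le hp0 hpq.le)
  exact fun x => ⟨gauge_le_of_setOf_le_one_subset hN0 hNh subset_pConvHull x,
    le_mul_gauge_of_subset_setOf_le hN0 hNh subset_pConvHull hbound x⟩

theorem distance_to_q_envelope (p q : ℝ) (hp0 : 0 < p) (hpq : p < q) (hq1 : q ≤ 1)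
    (n : ℕ) (N : (Fin n → ℝ) → ℝ)
    (hN0 : ∀ x, 0 ≤ N x) (hNe : ∀ x, N x = 0 ↔ x = 0)
    (hNh : ∀ (a : ℝ) (x : Fin n → ℝ), N (a • x) = |a| * N x)
    (hNp : ∀ x y : Fin n → ℝ, N (x + y) ^ p ≤ N x ^ p + N y ^ p) :
    ∀ x : Fin n → ℝ,
      gauge (pConvHull q {y : Fin n → ℝ | N y ≤ 1}) x ≤ N x ∧
      N x ≤ (n : ℝ) ^ ((1 : ℝ) / p - 1 / q) *
              gauge (pConvHull q {y : Fin n → ℝ | N y ≤ 1}) x :=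
  distance_to_q_envelope_general p q hp0 hpq hq1 n N hN0 hNh hNp
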